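/- arXiv:2007.11368 — 8 statements merged into one kernel-verified Lean document; each statement's English description precedes it below -/
import Mathlib

section
/- If Δ_{A,B}^m(I) = 0 then Δ_{A^n,B^n}^m(I) = 0 for every integer n ≥ 1; that is, ∑_{j=0}^m (-1)^j C(m,j) A^{n(m-j)} B^{n(m-j)} = 0. -/
open Finset

/-- Δ_{A,B}^r(I) = ∑_{j=0}^r (-1)^j C(r,j) A^{r-j} B^{r-j} -/
noncomputable def elemDelta {X : Type*} [NormedAddCommGroup X] [NormedSpace ℂ X]
    (A B : X →L[ℂ] X) (r : ℕ) : X →L[ℂ] X :=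
  ∑ j ∈ Finset.range (r + 1), ((-1 : ℂ) ^ j * (r.choose j : ℂ)) • (A ^ (r - j) * B ^ (r - j))

/-- δ_{A,B}^r(I) = ∑_{j=0}^r (-1)^j C(r,j) A^{r-j} B^{j} -/
noncomputable def elemdelta {X : Type*} [NormedAddCommGroup X] [NormedSpace ℂ X]
    (A B : X →L[ℂ] X) (r : ℕ) : X →L[ℂ] X :=
  ∑ j ∈ Finset.range (r + 1), ((-1 : ℂ) ^ j * (r.choose j : ℂ)) • (A ^ (r - j) * B ^ j)

variable {X : Type*} [NormedAddCommGroup X] [NormedSpace ℂ X]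

/-!
Writing `L T = A T B`, one has `Δ_{A,B}^m(I) = (L - 1)^m I` and `L^n T = A^n T B^n`, so
`Δ_{A^n,B^n}^m(I) = (L^n - 1)^m I`. Since `L^n - 1 = (1 + L + ⋯ + L^{n-1})(L - 1)` with commuting
factors, `(L^n - 1)^m` is a multiple of `(L - 1)^m`, which kills `I`.
-/

theorem LinearMap.mulLeftRight_pow {R A : Type*} [CommSemiring R] [Semiring A] [Algebra R A]
    (a b : A) (n : ℕ) : mulLeftRight R (a, b) ^ n = mulLeftRight R (a ^ n, b ^ n) := by
  change (mulRight R b * mulLeft R a) ^ n = mulRight R (b ^ n) * mulLeft R (a ^ n)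
  rw [(commute_mulLeft_right a b).symm.mul_pow, pow_mulLeft, pow_mulRight]

theorem sub_one_pow_eq_sum {R S : Type*} [CommRing R] [Ring S] [Algebra R S] (a : S) (r : ℕ) :
    (a - 1) ^ r = ∑ j ∈ range (r + 1), ((-1 : R) ^ j * r.choose j) • a ^ (r - j) := by
  rw [sub_eq_neg_add, (Commute.neg_one_left a).add_pow]
  refine sum_congr rfl fun j _ => ?_
  rw [Algebra.smul_def, map_mul, map_pow, map_neg, map_one, map_natCast, mul_assoc,
    ← Nat.cast_comm, mul_assoc]

theorem pow_sub_one_pow_eq_geom_sum_pow_mul {S : Type*} [Ring S] (a : S) (n m : ℕ) :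
    (a ^ n - 1) ^ m = (∑ i ∈ range n, a ^ i) ^ m * (a - 1) ^ m := by
  have hcomm : Commute (∑ i ∈ range n, a ^ i) (a - 1) :=
    Commute.sum_left _ _ _ fun i _ => ((Commute.refl a).pow_left i).sub_right (Commute.one_right _)
  rw [← hcomm.mul_pow, geom_sum_mul]

theorem elemDelta_eq_mulLeftRight_sub_one_pow (A B : X →L[ℂ] X) (r : ℕ) :
    elemDelta A B r = ((LinearMap.mulLeftRight ℂ (A, B) - 1) ^ r) 1 := by
  rw [sub_one_pow_eq_sum (R := ℂ), LinearMap.sum_apply, elemDelta]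
  refine sum_congr rfl fun j _ => ?_
  rw [LinearMap.smul_apply, LinearMap.mulLeftRight_pow, LinearMap.mulLeftRight_apply, mul_one]

theorem stmt2 (A B : X →L[ℂ] X) (m : ℕ) (h : elemDelta A B m = 0) :
    ∀ n : ℕ, 1 ≤ n → elemDelta (A ^ n) (B ^ n) m = 0 := by
  intro n _
  rw [elemDelta_eq_mulLeftRight_sub_one_pow] at h ⊢
  rw [← LinearMap.mulLeftRight_pow, pow_sub_one_pow_eq_geom_sum_pow_mul, Module.End.mul_apply, h,
    map_zero]
end

section
/- If δ_{A,B}^m(I) = 0 then δ_{A^n,B^n}^m(I) = 0 for every integer n ≥ 1; that is, ∑_{j=0}^m (-1)^j C(m,j) A^{n(m-j)} B^{nj} = 0. -/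
/-!
With `L = mulLeft A` and `R = mulRight B`, which commute, `δ_{A,B}^m(I) = (L - R)^m I`.
Since `mulLeft (A^n) - mulRight (B^n) = L^n - R^n = S (L - R)` with `S` the geometric sum
`∑ L^i R^(n-1-i)`, which commutes with `L - R`, we get
`(L^n - R^n)^m I = S^m ((L - R)^m I) = 0`.
-/

open Finset

variable {X : Type*} [NormedAddCommGroup X] [NormedSpace ℂ X]

theorem elemdelta_eq_pow_apply_one (A B : X →L[ℂ] X) (r : ℕ) :
    elemdelta A B r = ((LinearMap.mulLeft ℂ A - LinearMap.mulRight ℂ B) ^ r) 1 := by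
  have hc : Commute ((-1 : ℂ) • LinearMap.mulRight ℂ B) (LinearMap.mulLeft ℂ A) :=
    (LinearMap.commute_mulLeft_right A B).symm.smul_left _
  rw [sub_eq_neg_add, ← neg_one_smul ℂ (LinearMap.mulRight ℂ B), hc.add_pow',
    Nat.sum_antidiagonal_eq_sum_range_succ_mk, LinearMap.sum_apply, elemdelta]
  refine sum_congr rfl fun j _ => ?_
  rw [smul_pow, LinearMap.pow_mulLeft, LinearMap.pow_mulRight, mul_smul, Nat.cast_smul_eq_nsmul]
  simp [Module.End.mul_apply]

theorem Commute.pow_sub_pow_pow {R : Type*} [Ring R] {x y : R} (h : Commute x y) (n m : ℕ) :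
    (x ^ n - y ^ n) ^ m = (∑ i ∈ range n, x ^ i * y ^ (n - 1 - i)) ^ m * (x - y) ^ m := by
  have hS : Commute (∑ i ∈ range n, x ^ i * y ^ (n - 1 - i)) (x - y) :=
    (h.geom_sum₂_mul n).trans (h.mul_geom_sum₂ n).symm
  rw [← h.geom_sum₂_mul, hS.mul_pow]

theorem stmt3 (A B : X →L[ℂ] X) (m : ℕ) (h : elemdelta A B m = 0) :
    ∀ n : ℕ, 1 ≤ n → elemdelta (A ^ n) (B ^ n) m = 0 := by
  intro n _
  rw [elemdelta_eq_pow_apply_one, ← LinearMap.pow_mulLeft, ← LinearMap.pow_mulRight,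
    (LinearMap.commute_mulLeft_right A B).pow_sub_pow_pow, Module.End.mul_apply,
    ← elemdelta_eq_pow_apply_one, h, map_zero]
end

section
/- If A and B are invertible and Δ_{A,B}^m(I) = 0, then Δ_{A^{-1},B^{-1}}^m(I) = 0. -/
/-! Reindexing `j ↦ m - j` shows `∑ⱼ (-1)ʲ C(m,j) Aʲ Bʲ = (-1)ᵐ Δ_{A,B}^m(I) = 0`, and
`Δ_{A⁻¹,B⁻¹}^m(I) = A⁻ᵐ (∑ⱼ (-1)ʲ C(m,j) Aʲ Bʲ) B⁻ᵐ` since `A⁻¹^(m-j) = A⁻ᵐ Aʲ` and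
`B⁻¹^(m-j) = Bʲ B⁻ᵐ`. -/

open Finset

variable {X : Type*} [NormedAddCommGroup X] [NormedSpace ℂ X]

theorem sum_range_alternating_choose_smul_reflect {𝕜 M : Type*} [Ring 𝕜] [AddCommGroup M]
    [Module 𝕜 M] (f : ℕ → M) (m : ℕ) :
    ∑ j ∈ range (m + 1), ((-1 : 𝕜) ^ j * (m.choose j : 𝕜)) • f j =
      (-1 : 𝕜) ^ m • ∑ j ∈ range (m + 1), ((-1 : 𝕜) ^ j * (m.choose j : 𝕜)) • f (m - j) := by
  rw [← sum_range_reflect, smul_sum]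
  refine sum_congr rfl fun j hj => ?_
  have hjm : j ≤ m := Nat.lt_succ_iff.mp (mem_range.mp hj)
  have hsign : (-1 : 𝕜) ^ m = (-1) ^ (m - j) * (-1) ^ j := by
    rw [← pow_add, Nat.sub_add_cancel hjm]
  rw [Nat.add_sub_cancel, Nat.choose_symm hjm, smul_smul, hsign, mul_assoc,
    ← mul_assoc ((-1) ^ j), ← pow_add, Even.neg_one_pow ⟨j, rfl⟩, one_mul]

theorem sum_smul_inv_pow_sub_mul_inv_pow_sub {R 𝕜 : Type*} [Semiring R] [SMul 𝕜 R]
    [IsScalarTower 𝕜 R R] [SMulCommClass 𝕜 R R] (a b : Rˣ) (c : ℕ → 𝕜) (m : ℕ) :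
    ∑ j ∈ range (m + 1), c j • (((a⁻¹ : Rˣ) : R) ^ (m - j) * ((b⁻¹ : Rˣ) : R) ^ (m - j)) =
      ((a⁻¹ : Rˣ) : R) ^ m * (∑ j ∈ range (m + 1), c j • ((a : R) ^ j * (b : R) ^ j)) *
        ((b⁻¹ : Rˣ) : R) ^ m := by
  rw [mul_sum, sum_mul]
  refine sum_congr rfl fun j hj => ?_
  have hjm : j ≤ m := Nat.lt_succ_iff.mp (mem_range.mp hj)
  have ha : ((a⁻¹ : Rˣ) : R) ^ (m - j) = ((a⁻¹ : Rˣ) : R) ^ m * (a : R) ^ j := by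
    simpa using congrArg Units.val (inv_pow_sub a hjm)
  have hb : ((b⁻¹ : Rˣ) : R) ^ (m - j) = (b : R) ^ j * ((b⁻¹ : Rˣ) : R) ^ m := by
    simpa using congrArg Units.val
      ((inv_pow_sub b hjm).trans (Commute.pow_pow_self b m j).inv_left.eq)
  rw [ha, hb, mul_smul_comm, smul_mul_assoc]
  simp only [mul_assoc]

theorem stmt4 (A B : (X →L[ℂ] X)ˣ) (m : ℕ)
    (h : elemDelta (A : X →L[ℂ] X) (B : X →L[ℂ] X) m = 0) :
    elemDelta ((A⁻¹ : (X →L[ℂ] X)ˣ) : X →L[ℂ] X) ((B⁻¹ : (X →L[ℂ] X)ˣ) : X →L[ℂ] X) m = 0 := by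
  have hreversed : ∑ j ∈ range (m + 1),
      ((-1 : ℂ) ^ j * (m.choose j : ℂ)) • ((A : X →L[ℂ] X) ^ j * (B : X →L[ℂ] X) ^ j) = 0 := by
    rw [sum_range_alternating_choose_smul_reflect, ← elemDelta, h, smul_zero]
  rw [elemDelta, sum_smul_inv_pow_sub_mul_inv_pow_sub, hreversed, mul_zero, zero_mul]
end

section
/- If A^{n-1-i} Δ_{A,B}^{m+i}(I) B^{n-1-i} = 0 for some integer n ≥ 1 and all i with 0 ≤ i ≤ n-1, then Δ_{A,B}^m(I) = 0. -/
open Finset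

variable {X : Type*} [NormedAddCommGroup X] [NormedSpace ℂ X]

/-!
Writing `T k = A ^ k * B ^ k`, the binomial expansion shows that `Δ_{A,B}^r(I)` is the image of
`(X - 1) ^ r` under the linear map `ℂ[X] → L(X)` sending `X ^ k` to `T k`. Since `A * T k * B = T (k + 1)`,
sandwiching between `A` and `B` corresponds to multiplication by `X = (X - 1) + 1`, which gives
`A Δ^r B = Δ^(r+1) + Δ^r`. Hence `A^k Δ^r B^k` vanishes as soon as `A^(k+1) Δ^r B^(k+1)` and
`A^k Δ^(r+1) B^k` do, and descending along the anti-diagonals `k + (r - m) = const` from the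
hypotheses reaches `Δ^m = 0`.
-/

open Polynomial

section SandwichEval

variable {K R : Type*} [CommRing K] [Ring R] [Algebra K R]

noncomputable def sandwichEval (a b : R) : K[X] →ₗ[K] R :=
  lsum fun k => LinearMap.toSpanSingleton K R (a ^ k * b ^ k)

theorem sandwichEval_monomial (a b : R) (k : ℕ) (c : K) :
    sandwichEval a b (monomial k c) = c • (a ^ k * b ^ k) := by
  simp [sandwichEval]

theorem mul_sandwichEval_mul (a b : R) (p : K[X]) :
    a * sandwichEval a b p * b = sandwichEval a b (Polynomial.X * p) := by
  induction p using Polynomial.induction_on' with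
  | add p q hp hq => rw [mul_add, map_add, mul_add, add_mul, hp, hq, map_add]
  | monomial k c =>
    rw [X_mul_monomial, sandwichEval_monomial, sandwichEval_monomial, mul_smul_comm,
      smul_mul_assoc, pow_succ', pow_succ, mul_assoc, mul_assoc, mul_assoc]

end SandwichEval

section Descent

variable {R : Type*} [Ring R]

theorem pow_mul_mul_pow_eq_zero_of_succ {a b : R} {D : ℕ → R}
    (hD : ∀ r, a * D r * b = D (r + 1) + D r) {k r : ℕ}
    (h₁ : a ^ (k + 1) * D r * b ^ (k + 1) = 0) (h₂ : a ^ k * D (r + 1) * b ^ k = 0) :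
    a ^ k * D r * b ^ k = 0 := by
  have key : a ^ (k + 1) * D r * b ^ (k + 1) = a ^ k * D (r + 1) * b ^ k + a ^ k * D r * b ^ k :=
    calc a ^ (k + 1) * D r * b ^ (k + 1) = a ^ k * (a * D r * b) * b ^ k := by
          rw [pow_succ, pow_succ']; simp only [mul_assoc]
      _ = a ^ k * D (r + 1) * b ^ k + a ^ k * D r * b ^ k := by rw [hD, mul_add, add_mul]
  rwa [h₁, h₂, zero_add, eq_comm] at key

theorem eq_zero_of_forall_antidiagonal {a b : R} {D : ℕ → R}
    (hD : ∀ r, a * D r * b = D (r + 1) + D r) (N s : ℕ)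
    (h : ∀ i j, i + j = N → a ^ i * D (s + j) * b ^ i = 0) :
    D s = 0 := by
  induction N with
  | zero => simpa using h 0 0 rfl
  | succ N ih =>
    refine ih fun i j hij => pow_mul_mul_pow_eq_zero_of_succ hD ?_ ?_
    · exact h (i + 1) j (by omega)
    · exact h i (j + 1) (by omega)

end Descent

theorem elemDelta_eq_sandwichEval (A B : X →L[ℂ] X) (r : ℕ) :
    elemDelta A B r = sandwichEval A B ((Polynomial.X - 1 : ℂ[X]) ^ r) := by
  rw [sub_eq_neg_add, add_pow, map_sum, elemDelta]
  refine Finset.sum_congr rfl fun j _ => ?_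
  have : (-1 : ℂ[X]) ^ j * Polynomial.X ^ (r - j) * (r.choose j : ℂ[X]) =
      monomial (r - j) ((-1 : ℂ) ^ j * r.choose j) := by
    simp only [← C_mul_X_pow_eq_monomial, map_mul, map_pow, map_neg, map_one, map_natCast]
    ring
  rw [this, sandwichEval_monomial]

theorem mul_elemDelta_mul (A B : X →L[ℂ] X) (r : ℕ) :
    A * elemDelta A B r * B = elemDelta A B (r + 1) + elemDelta A B r := by
  simp only [elemDelta_eq_sandwichEval]
  rw [mul_sandwichEval_mul, ← map_add]
  congr 1
  ring

theorem stmt9_general (A B : X →L[ℂ] X) (m n : ℕ)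
    (h : ∀ i : ℕ, i ≤ n - 1 → A ^ (n - 1 - i) * elemDelta A B (m + i) * B ^ (n - 1 - i) = 0) :
    elemDelta A B m = 0 := by
  refine eq_zero_of_forall_antidiagonal (mul_elemDelta_mul A B) (n - 1) m fun i j hij => ?_
  obtain rfl : i = n - 1 - j := by omega
  exact h j (by omega)

theorem stmt9 (A B : X →L[ℂ] X) (m n : ℕ) (hn : 1 ≤ n)
    (h : ∀ i : ℕ, i ≤ n - 1 → A ^ (n - 1 - i) * elemDelta A B (m + i) * B ^ (n - 1 - i) = 0) :
    elemDelta A B m = 0 :=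
  stmt9_general A B m n h
end

section
/- Let A₁, A₂, B₁, B₂ be bounded operators with A₁A₂ = A₂A₁ and B₁B₂ = B₂B₁. If Δ_{A₁,B₁}^m(I) = 0 and Δ_{A₂,B₂}^n(I) = 0, then Δ_{A₁A₂, B₁B₂}^{m+n-1}(I) = 0. -/
/-!
With `L = mulLeftRight ℂ (A, B) : T ↦ A * T * B`, one has `Δ_{A,B}^r(I) = (L - 1)^r I`.
For commuting pairs the maps `x = L_{A₁,B₁}` and `y = L_{A₂,B₂}` commute and `x * y = L_{A₁A₂,B₁B₂}`.
Writing `x * y - 1 = (x - 1) * y + (y - 1)` as a sum of two commuting elements, every term of the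
binomial expansion of its `(m + n - 1)`-st power contains `(x - 1)^m` or `(y - 1)^n`, both of which
annihilate `I`.
-/

open Finset

variable {X : Type*} [NormedAddCommGroup X] [NormedSpace ℂ X]

namespace LinearMap

variable {R A : Type*} [CommSemiring R] [Semiring A] [Algebra R A]

theorem mulLeftRight_pow_apply (a b x : A) (k : ℕ) :
    (mulLeftRight R (a, b) ^ k) x = a ^ k * x * b ^ k := by
  induction k with
  | zero => simp
  | succ k ih =>
    rw [pow_succ', Module.End.mul_apply, ih, mulLeftRight_apply, pow_succ', pow_succ]
    simp only [mul_assoc]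

theorem mulLeftRight_mul_mulLeftRight {a b a' b' : A} (hb : Commute b b') :
    mulLeftRight R (a, b) * mulLeftRight R (a', b') = mulLeftRight R (a * a', b * b') := by
  ext x
  simp [mul_assoc, hb.eq]

theorem commute_mulLeftRight {a b a' b' : A} (ha : Commute a a') (hb : Commute b b') :
    Commute (mulLeftRight R (a, b)) (mulLeftRight R (a', b')) := by
  rw [Commute, SemiconjBy, mulLeftRight_mul_mulLeftRight hb,
    mulLeftRight_mul_mulLeftRight hb.symm, ha.eq, hb.eq]

end LinearMap

theorem Commute.mul_sub_one_pow_smul_eq_zero {S M : Type*} [Ring S] [AddCommGroup M]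
    [Module S M] {x y : S} (hxy : Commute x y) {t : M} {m n : ℕ}
    (hx : (x - 1) ^ m • t = 0) (hy : (y - 1) ^ n • t = 0) :
    (x * y - 1) ^ (m + n - 1) • t = 0 := by
  -- the elements of `S` killing `t` form a left ideal, where the binomial bound applies
  let I : Ideal S := LinearMap.ker (LinearMap.toSpanSingleton S M t)
  have mem_I (s : S) : s ∈ I ↔ s • t = 0 := LinearMap.mem_ker
  have hsplit : x * y - 1 = (x - 1) * y + (y - 1) := by noncomm_ring
  have hxy' : Commute (x - 1) y := hxy.sub_left (Commute.one_left y)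
  rw [← mem_I, hsplit]
  refine I.add_pow_add_pred_mem_of_pow_mem_of_commute ?_ ((mem_I _).2 hy) ?_
  · rw [hxy'.mul_pow, (hxy'.pow_pow m m).eq]
    exact I.mul_mem_left _ ((mem_I _).2 hx)
  · exact (hxy'.mul_left (Commute.refl y)).sub_right (Commute.one_right _)

theorem sub_one_pow_eq_sum_smul (R : Type*) {A : Type*} [CommRing R] [Ring A] [Algebra R A]
    (x : A) (r : ℕ) :
    (x - 1) ^ r = ∑ j ∈ range (r + 1), ((-1 : R) ^ j * r.choose j) • x ^ (r - j) := by
  rw [sub_eq_neg_add, (Commute.neg_one_left x).add_pow]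
  refine sum_congr rfl fun j _ => ?_
  simp [Algebra.smul_def, mul_assoc, (Nat.cast_commute _ _).eq]

theorem elemDelta_eq_mulLeftRight_sub_one_pow_smul (A B : X →L[ℂ] X) (r : ℕ) :
    elemDelta A B r = (LinearMap.mulLeftRight ℂ (A, B) - 1) ^ r • (1 : X →L[ℂ] X) := by
  rw [sub_one_pow_eq_sum_smul ℂ, sum_smul, elemDelta]
  simp_rw [smul_assoc, Module.End.smul_def, LinearMap.mulLeftRight_pow_apply, mul_one]

theorem stmt10 (A₁ A₂ B₁ B₂ : X →L[ℂ] X) (m n : ℕ)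
    (hA : A₁ * A₂ = A₂ * A₁) (hB : B₁ * B₂ = B₂ * B₁)
    (h1 : elemDelta A₁ B₁ m = 0) (h2 : elemDelta A₂ B₂ n = 0) :
    elemDelta (A₁ * A₂) (B₁ * B₂) (m + n - 1) = 0 := by
  rw [elemDelta_eq_mulLeftRight_sub_one_pow_smul] at h1 h2 ⊢
  rw [← LinearMap.mulLeftRight_mul_mulLeftRight hB]
  exact (LinearMap.commute_mulLeftRight hA hB).mul_sub_one_pow_smul_eq_zero h1 h2
end

section
/- Let A₁, A₂, B₁, B₂ be bounded operators with A₁A₂ = A₂A₁ and B₁B₂ = B₂B₁. If δ_{A₁,B₁}^m(I) = 0 and δ_{A₂,B₂}^n(I) = 0, then δ_{A₁A₂, B₁B₂}^{m+n-1}(I) = 0. -/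
/-!
Write `δ_{a,b} T = a T - T b`, so that `elemdelta A B r = δ_{A,B}^r (1)`. When `A₁, A₂` and
`B₁, B₂` commute, `δ_{A₁A₂,B₁B₂} = L_{A₂} δ_{A₁,B₁} + R_{B₁} δ_{A₂,B₂}` is a sum of two commuting
operators whose `m`-th and `n`-th powers kill `1`, so by the binomial theorem its `(m+n-1)`-th
power kills `1` as well.
-/

open Finset

namespace Module.End

variable {R M : Type*} [Ring R] [AddCommGroup M] [Module R M]

/-- The endomorphisms killing `v` form a left ideal, to which the binomial argument for commuting
nilpotents applies. -/
theorem add_pow_add_pred_apply_eq_zero {f g : Module.End R M} {v : M} {m n : ℕ}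
    (hfg : Commute f g) (hf : (f ^ m) v = 0) (hg : (g ^ n) v = 0) :
    ((f + g) ^ (m + n - 1)) v = 0 :=
  Ideal.add_pow_add_pred_mem_of_pow_mem_of_commute
    (LinearMap.ker (LinearMap.toSpanSingleton (Module.End R M) M v)) hf hg hfg

end Module.End

namespace LinearMap

variable (R : Type*) {A : Type*} [CommRing R] [Ring A] [Algebra R A]

def genDerivation (a b : A) : Module.End R A :=
  mulLeft R a - mulRight R b

variable {R}

theorem genDerivation_pow_apply_one (a b : A) (r : ℕ) :
    (genDerivation R a b ^ r) 1 =
      ∑ j ∈ Finset.range (r + 1), ((-1 : R) ^ j * (r.choose j : R)) • (a ^ (r - j) * b ^ j) := by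
  have hcomm : Commute (-mulRight R b) (mulLeft R a) :=
    (commute_mulLeft_right (R := R) a b).symm.neg_left
  rw [genDerivation, sub_eq_neg_add, hcomm.add_pow, sum_apply]
  refine Finset.sum_congr rfl fun j _ => ?_
  rw [← neg_one_smul R (mulRight R b), smul_pow, pow_mulRight, pow_mulLeft]
  simp only [smul_mul_assoc, smul_apply, Module.End.mul_apply, Module.End.natCast_apply,
    mulLeft_apply, mulRight_apply]
  simp [mul_smul, ← Nat.cast_smul_eq_nsmul R]

theorem commute_mulLeft_genDerivation {c a : A} (h : Commute c a) (b : A) :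
    Commute (mulLeft R c) (genDerivation R a b) :=
  (h.map (NonUnitalAlgHom.lmul R A)).sub_right (commute_mulLeft_right c b)

theorem commute_mulRight_genDerivation {c b : A} (h : Commute c b) (a : A) :
    Commute (mulRight R c) (genDerivation R a b) := by
  have hright : Commute (mulRight R c) (mulRight R b) := by
    ext x
    simp only [Module.End.mul_apply, mulRight_apply, mul_assoc, h.eq]
  exact (commute_mulLeft_right a c).symm.sub_right hright

theorem commute_genDerivation {a₁ a₂ b₁ b₂ : A} (ha : Commute a₁ a₂) (hb : Commute b₁ b₂) :
    Commute (genDerivation R a₁ b₁) (genDerivation R a₂ b₂) :=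
  (commute_mulLeft_genDerivation ha b₂).sub_left (commute_mulRight_genDerivation hb a₂)

theorem genDerivation_mul {a₁ a₂ b₁ b₂ : A} (ha : Commute a₁ a₂) (hb : Commute b₁ b₂) :
    genDerivation R (a₁ * a₂) (b₁ * b₂) =
      mulLeft R a₂ * genDerivation R a₁ b₁ + mulRight R b₁ * genDerivation R a₂ b₂ := by
  ext T
  simp only [genDerivation, add_apply, sub_apply, Module.End.mul_apply, mulLeft_apply,
    mulRight_apply, ha.eq, hb.eq]
  noncomm_ring

theorem genDerivation_mul_pow_apply_one_eq_zero {a₁ a₂ b₁ b₂ : A} {m n : ℕ}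
    (ha : Commute a₁ a₂) (hb : Commute b₁ b₂) (h₁ : (genDerivation R a₁ b₁ ^ m) 1 = 0)
    (h₂ : (genDerivation R a₂ b₂ ^ n) 1 = 0) :
    (genDerivation R (a₁ * a₂) (b₁ * b₂) ^ (m + n - 1)) 1 = 0 := by
  have hl : Commute (mulLeft R a₂) (mulRight R b₁ * genDerivation R a₂ b₂) :=
    (commute_mulLeft_right a₂ b₁).mul_right (commute_mulLeft_genDerivation (.refl a₂) b₂)
  have hδ : Commute (genDerivation R a₁ b₁) (mulRight R b₁ * genDerivation R a₂ b₂) :=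
    (commute_mulRight_genDerivation (.refl b₁) a₁).symm.mul_right (commute_genDerivation ha hb)
  rw [genDerivation_mul ha hb]
  refine Module.End.add_pow_add_pred_apply_eq_zero (hl.mul_left hδ) ?_ ?_
  · rw [(commute_mulLeft_genDerivation ha.symm b₁).mul_pow, Module.End.mul_apply, h₁, map_zero]
  · rw [(commute_mulRight_genDerivation hb a₂).mul_pow, Module.End.mul_apply, h₂, map_zero]

end LinearMap

variable {X : Type*} [NormedAddCommGroup X] [NormedSpace ℂ X]

theorem stmt11 (A₁ A₂ B₁ B₂ : X →L[ℂ] X) (m n : ℕ)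
    (hA : A₁ * A₂ = A₂ * A₁) (hB : B₁ * B₂ = B₂ * B₁)
    (h1 : elemdelta A₁ B₁ m = 0) (h2 : elemdelta A₂ B₂ n = 0) :
    elemdelta (A₁ * A₂) (B₁ * B₂) (m + n - 1) = 0 := by
  simp only [elemdelta, ← LinearMap.genDerivation_pow_apply_one] at h1 h2 ⊢
  exact LinearMap.genDerivation_mul_pow_apply_one_eq_zero hA hB h1 h2
end

section
/- Let Δ_{A,B}^m(I) = 0 and let N be an n-nilpotent operator (N^n = 0) commuting with B. Then Δ_{A,B+N}^{m+n-1}(I) = 0. -/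
/-!
Write `T_{A,C} x = A x C` for the elementary operator on `B(X)`; then
`Δ_{A,C}^r(I) = (T_{A,C} - 1)^r I`. Since `T_{A,B+N} - 1 = (T_{A,B} - 1) + T_{A,N}`, where the two
summands commute because `BN = NB`, and `T_{A,N}^n = T_{A^n,N^n} = 0`, the binomial expansion of
`(T_{A,B+N} - 1)^{m+n-1} I` vanishes term by term: each term contains either `(T_{A,B} - 1)^i I`
with `i ≥ m` or `T_{A,N}^j` with `j ≥ n`.
-/

open Finset

variable {X : Type*} [NormedAddCommGroup X] [NormedSpace ℂ X]

theorem Commute.add_pow_smul_eq_zero_of_add_le_succ {S M : Type*} [Semiring S] [AddCommMonoid M]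
    [Module S M] {x y : S} (h_comm : Commute x y) {v : M} {m n k : ℕ} (hx : x ^ m • v = 0)
    (hy : y ^ n = 0) (h : m + n ≤ k + 1) : (x + y) ^ k • v = 0 := by
  rw [h_comm.add_pow', Finset.sum_smul]
  refine Finset.sum_eq_zero fun ⟨i, j⟩ hij => ?_
  rw [smul_assoc]
  suffices (x ^ i * y ^ j) • v = 0 by rw [this, smul_zero]
  by_cases hi : m ≤ i
  · rw [(h_comm.pow_pow i j).eq, ← Nat.sub_add_cancel hi, pow_add, mul_smul, mul_smul, hx,
      smul_zero, smul_zero]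
  · have hj : n ≤ j := by linarith [Finset.HasAntidiagonal.mem_antidiagonal.mp hij]
    rw [pow_eq_zero_of_le hj hy, mul_zero, zero_smul]

namespace LinearMap

variable {R A : Type*} [Semiring R] [Semiring A] [Module R A] [SMulCommClass R A A]
  [IsScalarTower R A A]

theorem mulLeftRight_pow_s13 (a b : A) (k : ℕ) :
    mulLeftRight R (a, b) ^ k = mulLeftRight R (a ^ k, b ^ k) := by
  induction k with
  | zero => ext; simp
  | succ k ih =>
    ext x
    rw [pow_succ, Module.End.mul_apply, ih]
    simp only [mulLeftRight_apply, pow_succ a, pow_succ' b, mul_assoc]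

theorem mulLeftRight_add_right (a b c : A) :
    mulLeftRight R (a, b + c) = mulLeftRight R (a, b) + mulLeftRight R (a, c) := by
  ext x
  simp [mul_add]

theorem commute_mulLeftRight_s13 {a b c d : A} (hac : Commute a c) (hbd : Commute b d) :
    Commute (mulLeftRight R (a, b)) (mulLeftRight R (c, d)) := by
  ext x
  simp only [Module.End.mul_apply, mulLeftRight_apply, mul_assoc, hbd.eq]
  rw [← mul_assoc a c, hac.eq, mul_assoc]

end LinearMap

open LinearMap

theorem elemDelta_eq_sub_one_pow_apply_one (A C : X →L[ℂ] X) (r : ℕ) :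
    elemDelta A C r = ((mulLeftRight ℂ (A, C) - 1) ^ r) 1 := by
  rw [← neg_add_eq_sub, (Commute.neg_one_left (mulLeftRight ℂ (A, C))).add_pow,
    LinearMap.sum_apply, elemDelta]
  refine Finset.sum_congr rfl fun j _ => ?_
  rw [show (-1 : Module.End ℂ (X →L[ℂ] X)) = algebraMap ℂ _ (-1) by simp, ← map_pow,
    mul_assoc, Module.End.mul_apply, Module.algebraMap_end_apply, Module.End.mul_apply,
    Module.End.natCast_apply, map_nsmul, mulLeftRight_pow_s13, mulLeftRight_apply, mul_one,
    mul_smul, Nat.cast_smul_eq_nsmul]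

theorem stmt13 (A B N : X →L[ℂ] X) (m n : ℕ)
    (h : elemDelta A B m = 0) (hN : N ^ n = 0) (hc : B * N = N * B) :
    elemDelta A (B + N) (m + n - 1) = 0 := by
  have hcomm : Commute (mulLeftRight ℂ (A, B) - 1) (mulLeftRight ℂ (A, N)) :=
    (commute_mulLeftRight_s13 (Commute.refl A) hc).sub_left (Commute.one_left _)
  have hnil : mulLeftRight ℂ (A, N) ^ n = 0 := by
    rw [mulLeftRight_pow_s13, hN]; ext; simp
  rw [elemDelta_eq_sub_one_pow_apply_one, mulLeftRight_add_right, add_sub_right_comm]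
  rw [elemDelta_eq_sub_one_pow_apply_one] at h
  exact hcomm.add_pow_smul_eq_zero_of_add_le_succ h hnil (by omega)
end

section
/- Let δ_{A,B}^m(I) = 0 and let N be an n-nilpotent operator (N^n = 0) commuting with B. Then δ_{A,B+N}^{m+n-1}(I) = 0. -/
/-!
With `L_A T = A T` and `R_B T = T B`, which commute, `δ_{A,B}^r(I) = (L_A - R_B)^r I`.
Replacing `B` by `B + N` adds `R_{-N}`, which commutes with `L_A - R_B` and satisfies
`R_{-N}^n = 0`. In the binomial expansion of `(L_A - R_B + R_{-N})^(m+n-1)` every term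
contains `(L_A - R_B)^k` with `k ≥ m`, which kills `I`, or `R_{-N}^j` with `j ≥ n`.
-/

open Finset

variable {X : Type*} [NormedAddCommGroup X] [NormedSpace ℂ X]

theorem Commute.add_pow_apply_eq_zero_of_pow_apply_eq_zero {R M : Type*} [Semiring R]
    [AddCommMonoid M] [Module R M] {f g : Module.End R M} {v : M} {m n p : ℕ}
    (hp : n + m ≤ p + 1) (hfg : Commute f g) (hf : (f ^ m) v = 0) (hg : g ^ n = 0) :
    ((f + g) ^ p) v = 0 := by
  -- Divisibility is one-sided; in the opposite ring the factor `f ^ m` lands next to `v`.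
  obtain ⟨c, hc⟩ := hfg.op.pow_dvd_add_pow_of_pow_eq_zero_right hp
    (by rw [← MulOpposite.op_pow, hg, MulOpposite.op_zero])
  have hfactor : (f + g) ^ p = c.unop * f ^ m := by
    apply MulOpposite.op_injective
    simpa only [MulOpposite.op_pow, MulOpposite.op_add, MulOpposite.op_mul,
      MulOpposite.op_unop] using hc
  rw [hfactor, Module.End.mul_apply, hf, map_zero]

theorem stmt14 (A B N : X →L[ℂ] X) (m n : ℕ)
    (h : elemdelta A B m = 0) (hN : N ^ n = 0) (hc : B * N = N * B) :
    elemdelta A (B + N) (m + n - 1) = 0 := by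
  set D := LinearMap.mulLeft ℂ A - LinearMap.mulRight ℂ B
  have hsplit : LinearMap.mulLeft ℂ A - LinearMap.mulRight ℂ (B + N) =
      D + LinearMap.mulRight ℂ (-N) := by
    ext T : 1
    simp only [D, LinearMap.sub_apply, LinearMap.add_apply, LinearMap.mulLeft_apply,
      LinearMap.mulRight_apply, mul_add, mul_neg]
    abel
  have hcomm : Commute D (LinearMap.mulRight ℂ (-N)) := by
    refine (LinearMap.commute_mulLeft_right A (-N)).sub_left ?_
    ext T
    simp [mul_assoc, hc]
  have hDm : (D ^ m) 1 = 0 := by rw [← elemdelta_eq_pow_apply_one, h]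
  have hNn : LinearMap.mulRight ℂ (-N) ^ n = 0 := by
    rw [LinearMap.pow_mulRight, neg_pow, hN, mul_zero, LinearMap.mulRight_zero_eq_zero]
  rw [elemdelta_eq_pow_apply_one, hsplit]
  exact hcomm.add_pow_apply_eq_zero_of_pow_apply_eq_zero (by omega) hDm hNn
end
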